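/- arXiv:2104.04086 — 5 statements merged into one kernel-verified Lean document; each statement's English description precedes it below -/
import Mathlib

section
/- Let H = ℚ[x₁,x₂]/(x₁² - x₂², x₁x₂) with |x₁| = |x₂| = 2. Then (x₁² - x₂², x₁x₂) is generated by a regular sequence in ℚ[x₁,x₂], i.e. x₁² - x₂² is nonzero and the image of x₁x₂ in ℚ[x₁,x₂]/(x₁² - x₂²) is not a zero divisor. -/
open MvPolynomial

namespace Halperin

abbrev A (k : ℕ) := MvPolynomial (Fin k) ℚ

/-- The degree-`n` graded piece of `A k ⧸ I` with respect to weights `w`. -/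
noncomputable def piece {k : ℕ} (w : Fin k → ℕ) (I : Ideal (A k)) (n : ℤ) :
    Submodule ℚ (A k ⧸ I) :=
  if 0 ≤ n then
    (weightedHomogeneousSubmodule ℚ w n.toNat).map (Ideal.Quotient.mkₐ ℚ I).toLinearMap
  else ⊥

/-- `u` is a regular sequence: each `u i` is a nonzerodivisor modulo the previous ones. -/
def IsRegSeq {k : ℕ} (u : Fin k → A k) : Prop :=
  ∀ i : Fin k, ∀ v : A k,
    v * u i ∈ Ideal.span {p | ∃ j, j < i ∧ p = u j} →
    v ∈ Ideal.span {p | ∃ j, j < i ∧ p = u j}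

/-- A presentation of a positively elliptic algebra. -/
structure Presentation (k : ℕ) where
  w : Fin k → ℕ
  du : Fin k → ℕ
  u : Fin k → A k
  wpos : ∀ i, 0 < w i
  weven : ∀ i, Even (w i)
  uhom : ∀ i, (u i).IsWeightedHomogeneous w (du i)
  unolin : ∀ i, ∀ m ∈ (u i).support, 2 ≤ m.sum fun _ e => e
  reg : IsRegSeq u

noncomputable def Presentation.I {k : ℕ} (P : Presentation k) : Ideal (A k) :=
  Ideal.span (Set.range P.u)

abbrev Presentation.H {k : ℕ} (P : Presentation k) := A k ⧸ P.I

/-- Extra conditions making a presentation a pure model with ordered degrees. -/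
def Presentation.Pure {k : ℕ} (P : Presentation k) : Prop :=
  Monotone P.w ∧ Monotone P.du ∧ ∀ i, 2 * P.w i ≤ P.du i

/-- `δ` is a graded derivation of degree `d` on `A k ⧸ I`. -/
structure IsGradedDer {k : ℕ} (w : Fin k → ℕ) (I : Ideal (A k)) (d : ℤ)
    (δ : (A k ⧸ I) →ₗ[ℚ] (A k ⧸ I)) : Prop where
  leibniz : ∀ a b, δ (a * b) = δ a * b + a * δ b
  graded : ∀ n : ℤ, ∀ x ∈ piece w I n, δ x ∈ piece w I (n + d)

/-- `n` is the formal dimension (socle degree). -/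
def IsFormalDim {k : ℕ} (w : Fin k → ℕ) (I : Ideal (A k)) (n : ℕ) : Prop :=
  piece w I n ≠ ⊥ ∧ ∀ m : ℤ, (n : ℤ) < m → piece w I m = ⊥

/-- `H*` splits: it admits a presentation in which the first `l` relations
only involve the first `l` generators (for some `0 < l < k'`). -/
def Splits {k : ℕ} (P : Presentation k) : Prop :=
  ∃ (k' : ℕ) (P' : Presentation k') (l : ℕ) (e : P.H ≃ₐ[ℚ] P'.H),
    0 < l ∧ l < k' ∧
    (∀ n : ℤ, (piece P.w P.I n).map e.toLinearMap = piece P'.w P'.I n) ∧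
    ∀ i : Fin k', (i : ℕ) < l →
      ∀ m ∈ (P'.u i).support, ∀ j : Fin k', l ≤ (j : ℕ) → m j = 0

noncomputable def shear (c : ℚ) : MvPolynomial (Fin 2) ℚ →ₐ[ℚ] MvPolynomial (Fin 2) ℚ :=
  aeval (fun i => if i = 0 then X 0 + c • X 1 else X 1)

lemma shear_comp (c d : ℚ) (h : c + d = 0) (p : MvPolynomial (Fin 2) ℚ) :
    shear c (shear d p) = p := by
  have key : (shear c).comp (shear d) = AlgHom.id ℚ _ := by
    apply MvPolynomial.algHom_ext
    intro i
    fin_cases i <;> simp [shear, smul_add, smul_smul]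
    rw [add_assoc, ← add_smul, h, zero_smul, add_zero]
  calc shear c (shear d p) = ((shear c).comp (shear d)) p := rfl
    _ = p := by rw [key]; rfl

lemma prime_X0 : Prime (X 0 : MvPolynomial (Fin 2) ℚ) := by
  rw [← MulEquiv.prime_iff (finSuccEquiv ℚ 1).toMulEquiv]
  have : (finSuccEquiv ℚ 1).toMulEquiv (X 0) = Polynomial.X := finSuccEquiv_X_zero
  rw [this]
  exact Polynomial.prime_X

lemma prime_shear (c : ℚ) : Prime (X 0 + c • X 1 : MvPolynomial (Fin 2) ℚ) := by
  have e : Function.Bijective (shear c) :=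
    ⟨fun a b h => by simpa [shear_comp (-c) c (by ring)] using congrArg (shear (-c)) h,
     fun a => ⟨shear (-c) a, shear_comp c (-c) (by ring) a⟩⟩
  have h2 := (MulEquiv.prime_iff (AlgEquiv.ofBijective (shear c) e).toMulEquiv).mpr prime_X0
  simpa [shear] using h2

lemma not_dvd_aux (c : ℚ) (f : Fin 2 → ℚ) (h0 : f 0 + c * f 1 = 0) (h1 : f 0 * f 1 ≠ 0) :
    ¬ (X 0 + c • X 1 : MvPolynomial (Fin 2) ℚ) ∣ X 0 * X 1 := by
  intro ⟨t, ht⟩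
  apply h1
  have := congrArg (eval f) ht
  simpa [h0] using this

/-- `x₁² - x₂², x₁x₂` is a regular sequence in `ℚ[x₁,x₂]`. -/
theorem stmt0 :
    (X 0 ^ 2 - X 1 ^ 2 : MvPolynomial (Fin 2) ℚ) ≠ 0 ∧
    Ideal.Quotient.mk (Ideal.span {(X 0 ^ 2 - X 1 ^ 2 : MvPolynomial (Fin 2) ℚ)}) (X 0 * X 1) ∈
      nonZeroDivisors
        (MvPolynomial (Fin 2) ℚ ⧸
          Ideal.span {(X 0 ^ 2 - X 1 ^ 2 : MvPolynomial (Fin 2) ℚ)}) := by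
  set P : MvPolynomial (Fin 2) ℚ := X 0 ^ 2 - X 1 ^ 2 with hP
  have hp : Prime (X 0 + (1:ℚ) • X 1 : MvPolynomial (Fin 2) ℚ) := prime_shear 1
  have hq : Prime (X 0 + (-1:ℚ) • X 1 : MvPolynomial (Fin 2) ℚ) := prime_shear (-1)
  have hfac : P = (X 0 + (1:ℚ) • X 1) * (X 0 + (-1:ℚ) • X 1) := by
    rw [hP]; ring_nf; rw [neg_one_smul, one_smul]; ring
  have hPne : P ≠ 0 := by
    rw [hfac]; exact mul_ne_zero hp.ne_zero hq.ne_zero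
  refine ⟨hPne, ?_⟩
  rw [mem_nonZeroDivisors_iff_right]
  intro z hz
  obtain ⟨v, rfl⟩ := Ideal.Quotient.mk_surjective z
  rw [← map_mul, Ideal.Quotient.eq_zero_iff_mem, Ideal.mem_span_singleton] at hz
  rw [Ideal.Quotient.eq_zero_iff_mem, Ideal.mem_span_singleton]
  -- hz : P ∣ v * (X 0 * X 1)
  have hpnd : ¬ (X 0 + (1:ℚ) • X 1 : MvPolynomial (Fin 2) ℚ) ∣ X 0 * X 1 :=
    not_dvd_aux 1 ![1, -1] (by norm_num) (by norm_num)
  have hqnd : ¬ (X 0 + (-1:ℚ) • X 1 : MvPolynomial (Fin 2) ℚ) ∣ X 0 * X 1 :=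
    not_dvd_aux (-1) ![1, 1] (by norm_num) (by norm_num)
  rw [hfac] at hz ⊢
  have hpv : (X 0 + (1:ℚ) • X 1 : MvPolynomial (Fin 2) ℚ) ∣ v := by
    rcases hp.2.2 v (X 0 * X 1) (dvd_trans (dvd_mul_right _ _) hz) with h | h
    · exact h
    · exact absurd h hpnd
  obtain ⟨v', rfl⟩ := hpv
  have hz' : (X 0 + (-1:ℚ) • X 1 : MvPolynomial (Fin 2) ℚ) ∣ v' * (X 0 * X 1) := by
    have : (X 0 + (1:ℚ) • X 1 : MvPolynomial (Fin 2) ℚ) * (X 0 + (-1:ℚ) • X 1) ∣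
        (X 0 + (1:ℚ) • X 1) * (v' * (X 0 * X 1)) := by
      convert hz using 1; ring
    exact (mul_dvd_mul_iff_left hp.ne_zero).mp
      ((mul_dvd_mul_left _ (dvd_refl _)).trans this)
  have hqv : (X 0 + (-1:ℚ) • X 1 : MvPolynomial (Fin 2) ℚ) ∣ v' := by
    rcases hq.2.2 v' (X 0 * X 1) hz' with h | h
    · exact h
    · exact absurd h hqnd
  obtain ⟨v'', rfl⟩ := hqv
  exact ⟨v'', by ring⟩


end Halperin
end

section
/- Let H = ℚ[x₁,x₂]/(x₁² - λx₂², x₁x₂) with λ ∈ ℚ \ {0}, graded with |x₁| = |x₂| = 2. The ℚ-linear derivation δ on ℚ[x₁,x₂] defined by δ(x₁) = x₁² and δ(x₂) = 0 maps the ideal (x₁² - λx₂², x₁x₂) into itself, and hence descends to a nonzero derivation on H of degree 2. -/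
open MvPolynomial

namespace Halperin

noncomputable def δA : Derivation ℚ (A 2) (A 2) :=
  mkDerivation ℚ (fun i : Fin 2 => if i = 0 then X 0 ^ 2 else 0)

lemma δA_eq : δA = (X 0 ^ 2 : A 2) • pderiv 0 := by
  apply derivation_ext
  intro i
  fin_cases i <;> simp [δA, mkDerivation_X]

lemma δA_apply (p : A 2) : δA p = X 0 ^ 2 * pderiv 0 p := by
  rw [δA_eq]; rfl

lemma hom_key {p : A 2} {n : ℕ} (hp : p.IsWeightedHomogeneous ![2,2] n) :
    (X 0 ^ 2 * pderiv 0 p : A 2).IsWeightedHomogeneous ![2,2] (n + 2) := by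
  classical
  conv_lhs => rw [p.as_sum]
  rw [map_sum, Finset.mul_sum]
  apply IsWeightedHomogeneous.sum
  intro s hs
  rw [pderiv_monomial]
  by_cases h0 : s 0 = 0
  · have : ((monomial (s - Finsupp.single 0 1) (coeff s p * (s 0 : ℚ))) : A 2) = 0 := by
      simp [h0]
    rw [this, mul_zero]
    exact isWeightedHomogeneous_zero ℚ _ _
  · have hc : coeff s p ≠ 0 := mem_support_iff.mp hs
    have hwd : Finsupp.weight ![2,2] s = n := hp hc
    have hle : Finsupp.single (0 : Fin 2) 1 ≤ s := by
      rw [Finsupp.single_le_iff]; omega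
    have hsplit : (s - Finsupp.single 0 1) + Finsupp.single 0 1 = s :=
      tsub_add_cancel_of_le hle
    have hw1 : Finsupp.weight ![2,2] (Finsupp.single (0 : Fin 2) 1) = 2 := by
      simp [Finsupp.weight_apply, Finsupp.sum_single_index]
    have hkey : Finsupp.weight ![2,2] (s - Finsupp.single 0 1) + 2 = n := by
      have h2 := congrArg (Finsupp.weight ![2,2]) hsplit
      rw [map_add, hw1] at h2
      omega
    have hX : (X 0 ^ 2 : A 2).IsWeightedHomogeneous ![2,2] 4 := by
      have := (isWeightedHomogeneous_X ℚ ![2,2] 0).mul (isWeightedHomogeneous_X ℚ ![2,2] 0)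
      simpa [pow_two] using this
    have hm : ((monomial (s - Finsupp.single 0 1) (coeff s p * (s 0 : ℚ))) : A 2).IsWeightedHomogeneous
        ![2,2] (Finsupp.weight ![2,2] (s - Finsupp.single 0 1)) :=
      isWeightedHomogeneous_monomial _ _ _ rfl
    have := hX.mul hm
    convert this using 1
    omega

lemma not_mem_span (lam : ℚ) (hlam : lam ≠ 0) :
    (X 0 ^ 2 : A 2) ∉ (Ideal.span {X 0 ^ 2 - C lam * X 1 ^ 2, X 0 * X 1} : Ideal (A 2)) := by
  intro h
  rw [Ideal.mem_span_pair] at h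
  obtain ⟨x, y, hxy⟩ := h
  have hg1 : (X 0 ^ 2 - C lam * X 1 ^ 2 : A 2)
      = monomial (Finsupp.single 0 2) 1 - monomial (Finsupp.single 1 2) lam := by
    rw [X_pow_eq_monomial, X_pow_eq_monomial, C_mul_monomial, mul_one]
  have hg2 : (X 0 * X 1 : A 2) = monomial (Finsupp.single 0 1 + Finsupp.single 1 1) 1 := by
    rw [X, X, monomial_mul, mul_one]
  rw [hg1, hg2] at hxy
  have e1 := congrArg (coeff (Finsupp.single 0 2)) hxy
  have e2 := congrArg (coeff (Finsupp.single 1 2)) hxy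
  rw [mul_sub, coeff_add, coeff_sub, coeff_mul_monomial', coeff_mul_monomial',
    coeff_mul_monomial', X_pow_eq_monomial, coeff_monomial] at e1 e2
  norm_num [Finsupp.le_def, Fin.forall_fin_two, Finsupp.single_apply, Finsupp.add_apply,
    Finsupp.single_eq_single_iff] at e1 e2
  rw [e1] at e2
  simp at e2
  exact hlam e2

lemma preserves (lam : ℚ) :
    ∀ p ∈ (Ideal.span {X 0 ^ 2 - C lam * X 1 ^ 2, X 0 * X 1} : Ideal (A 2)),
      δA p ∈ (Ideal.span {X 0 ^ 2 - C lam * X 1 ^ 2, X 0 * X 1} : Ideal (A 2)) := by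
  intro p hp
  set I : Ideal (A 2) := Ideal.span {X 0 ^ 2 - C lam * X 1 ^ 2, X 0 * X 1} with hI
  have hg1 : (X 0 ^ 2 - C lam * X 1 ^ 2 : A 2) ∈ I :=
    Ideal.subset_span (Set.mem_insert _ _)
  have hg2 : (X 0 * X 1 : A 2) ∈ I :=
    Ideal.subset_span (Set.mem_insert_of_mem _ rfl)
  have pd1 : (pderiv 0 (X 0 ^ 2 - C lam * X 1 ^ 2) : A 2) = 2 * X 0 := by
    simp [pow_two]
    ring
  have pd2 : (pderiv 0 (X 0 * X 1) : A 2) = X 1 := by simp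
  have m1 : δA (X 0 ^ 2 - C lam * X 1 ^ 2) ∈ I := by
    rw [hI, Ideal.mem_span_pair]
    refine ⟨2 * X 0, 2 * C lam * X 1, ?_⟩
    rw [δA_apply, pd1]
    ring
  have m2 : δA (X 0 * X 1) ∈ I := by
    rw [hI, Ideal.mem_span_pair]
    refine ⟨0, X 0, ?_⟩
    rw [δA_apply, pd2]
    ring
  rw [hI, Ideal.mem_span_pair] at hp
  obtain ⟨a, b, hab⟩ := hp
  rw [← hab, map_add, Derivation.leibniz, Derivation.leibniz]
  simp only [smul_eq_mul]
  exact I.add_mem (I.add_mem (Ideal.mul_mem_left _ _ m1) (Ideal.mul_mem_right _ _ hg1))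
    (I.add_mem (Ideal.mul_mem_left _ _ m2) (Ideal.mul_mem_right _ _ hg2))

noncomputable def desc (I : Ideal (A 2)) (h : ∀ p ∈ I, δA p ∈ I) :
    (A 2 ⧸ I) →ₗ[ℚ] (A 2 ⧸ I) :=
  (Submodule.liftQ (I.restrictScalars ℚ)
      ((Ideal.Quotient.mkₐ ℚ I).toLinearMap ∘ₗ δA.toLinearMap)
      (fun p hp => by
        simp only [LinearMap.mem_ker, LinearMap.comp_apply, Derivation.coeFn_coe,
          AlgHom.toLinearMap_apply, Ideal.Quotient.mkₐ_eq_mk]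
        rw [Ideal.Quotient.eq_zero_iff_mem]
        exact h p hp)) ∘ₗ
  (Submodule.Quotient.restrictScalarsEquiv ℚ I).symm.toLinearMap

lemma desc_mk (I : Ideal (A 2)) (h : ∀ p ∈ I, δA p ∈ I) (p : A 2) :
    desc I h (Ideal.Quotient.mk I p) = Ideal.Quotient.mk I (δA p) := rfl

/-- the derivation `δ(x₁) = x₁²`, `δ(x₂) = 0` preserves the ideal
`(x₁² - λx₂², x₁x₂)` and descends to a nonzero derivation of degree `2` on the quotient. -/
theorem stmt2 (lam : ℚ) (hlam : lam ≠ 0) :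
    (∀ p ∈ (Ideal.span {X 0 ^ 2 - C lam * X 1 ^ 2, X 0 * X 1} : Ideal (A 2)),
      (mkDerivation ℚ (fun i : Fin 2 => if i = 0 then X 0 ^ 2 else 0) : Derivation ℚ (A 2) (A 2)) p
        ∈ (Ideal.span {X 0 ^ 2 - C lam * X 1 ^ 2, X 0 * X 1} : Ideal (A 2))) ∧
    ∃ δ' : (A 2 ⧸ (Ideal.span {X 0 ^ 2 - C lam * X 1 ^ 2, X 0 * X 1} : Ideal (A 2))) →ₗ[ℚ]
        (A 2 ⧸ (Ideal.span {X 0 ^ 2 - C lam * X 1 ^ 2, X 0 * X 1} : Ideal (A 2))),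
      (∀ p : A 2,
        δ' (Ideal.Quotient.mk _ p) =
          Ideal.Quotient.mk _
            ((mkDerivation ℚ (fun i : Fin 2 => if i = 0 then X 0 ^ 2 else 0) :
                Derivation ℚ (A 2) (A 2)) p)) ∧
      IsGradedDer ![2, 2] (Ideal.span {X 0 ^ 2 - C lam * X 1 ^ 2, X 0 * X 1}) 2 δ' ∧
      δ' ≠ 0 := by
  set I : Ideal (A 2) := Ideal.span {X 0 ^ 2 - C lam * X 1 ^ 2, X 0 * X 1} with hI
  refine ⟨preserves lam, desc I (preserves lam), fun p => desc_mk _ _ p, ⟨?_, ?_⟩, ?_⟩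
  · -- Leibniz
    intro a b
    obtain ⟨p, rfl⟩ := Ideal.Quotient.mk_surjective a
    obtain ⟨q, rfl⟩ := Ideal.Quotient.mk_surjective b
    rw [← map_mul, desc_mk, desc_mk, desc_mk, Derivation.leibniz]
    simp only [smul_eq_mul, map_add, map_mul]
    ring
  · -- graded
    intro n x hx
    by_cases hn : 0 ≤ n
    · have hn2 : (0:ℤ) ≤ n + 2 := by omega
      rw [piece, if_pos hn] at hx
      rw [piece, if_pos hn2]
      obtain ⟨p, hp, rfl⟩ := hx
      simp only [AlgHom.toLinearMap_apply, Ideal.Quotient.mkₐ_eq_mk]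
      rw [desc_mk]
      refine ⟨δA p, ?_, rfl⟩
      have hp' : p.IsWeightedHomogeneous ![2,2] n.toNat := hp
      show (δA p).IsWeightedHomogeneous ![2,2] (n + 2).toNat
      have hnn : (n + 2).toNat = n.toNat + 2 := by omega
      rw [δA_apply, hnn]
      exact hom_key hp'
    · rw [piece, if_neg hn] at hx
      rw [Submodule.mem_bot] at hx
      rw [hx, map_zero]
      exact zero_mem _
  · -- nonzero
    intro h0
    apply not_mem_span lam hlam
    have hX2 : δA (X 0) = X 0 ^ 2 := by
      rw [δA_apply]; simp
    have h1 : Ideal.Quotient.mk I (X 0 ^ 2 : A 2) = 0 := by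
      rw [← hX2, ← desc_mk I (preserves lam), h0, LinearMap.zero_apply]
    rwa [Ideal.Quotient.eq_zero_iff_mem] at h1

end Halperin
end

section
/- (Land in Zero Lemma) Let H* be a finite-dimensional graded-commutative ℚ-algebra concentrated in even nonnegative degrees with H⁰ = ℚ, and let δ be a derivation on H* of negative degree. If x ∈ Hⁱ for some i > 0 and δ(x) ∈ H⁰, then δ(x) = 0. -/
open MvPolynomial

namespace Halperin

/-- Land in Zero Lemma. -/
theorem stmt3 (H : Type*) [CommRing H] [Algebra ℚ H] [FiniteDimensional ℚ H]
    (𝒜 : ℤ → Submodule ℚ H) [GradedAlgebra 𝒜]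
    (hodd : ∀ n : ℤ, Odd n → 𝒜 n = ⊥) (hneg : ∀ n : ℤ, n < 0 → 𝒜 n = ⊥)
    (hzero : 𝒜 0 = Submodule.span ℚ {1})
    (δ : H →ₗ[ℚ] H) (d : ℤ) (hd : d < 0)
    (hleib : ∀ a b : H, δ (a * b) = δ a * b + a * δ b)
    (hgr : ∀ n : ℤ, ∀ x ∈ 𝒜 n, δ x ∈ 𝒜 (n + d))
    (i : ℤ) (hi : 0 < i) (x : H) (hx : x ∈ 𝒜 i) (hδx : δ x ∈ 𝒜 0) :
    δ x = 0 := by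
  classical
  by_cases hcase : i + d = 0
  · -- δ x ∈ 𝒜 0 = span {1}, so δ x = c • 1; use nilpotency of x to show c = 0
    rw [hzero] at hδx
    rw [Submodule.mem_span_singleton] at hδx
    obtain ⟨c, hc⟩ := hδx
    -- x is nilpotent
    have hnil : ∃ N, x ^ N = 0 := by
      by_contra hn
      push_neg at hn
      have hind : iSupIndep 𝒜 :=
        (DirectSum.Decomposition.isInternal 𝒜).submodule_iSupIndep
      have hmem : ∀ n : ℕ, x ^ n ∈ 𝒜 (n * i) := fun n => SetLike.pow_mem_graded n hx
      have hinj : Function.Injective (fun n : ℕ => (n : ℤ) * i) := by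
        intro a b hab
        simp only [mul_eq_mul_right_iff] at hab
        rcases hab with h | h
        · exact_mod_cast h
        · omega
      have : LinearIndependent ℚ (fun n : ℕ => x ^ n) :=
        iSupIndep.linearIndependent (fun n : ℕ => 𝒜 ((n : ℤ) * i))
          (hind.comp hinj) hmem hn
      exact Module.Finite.not_linearIndependent_of_infinite (fun n : ℕ => x ^ n) this
    -- take the least N
    set N0 := Nat.find hnil with hN0def
    have hN0 : x ^ N0 = 0 := Nat.find_spec hnil
    rcases Nat.eq_zero_or_pos N0 with h0 | hpos
    · -- 1 = 0, trivial ring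
      have h1 : (1 : H) = 0 := by simpa [h0] using hN0
      have : δ x = δ x * 1 := by ring
      rw [this, h1, mul_zero]
    · have hlt : x ^ (N0 - 1) ≠ 0 := Nat.find_min hnil (by omega)
      -- Leibniz power rule
      have hpow : ∀ n : ℕ, δ (x ^ (n + 1)) = (n + 1 : ℚ) • (x ^ n * δ x) := by
        intro n
        induction n with
        | zero => simp
        | succ m ih =>
          have : x ^ (m + 2) = x * x ^ (m + 1) := by ring
          rw [this, hleib, ih]
          push_cast
          rw [mul_smul_comm, show x * (x ^ m * δ x) = x ^ (m+1) * δ x by ring,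
            show δ x * x ^ (m+1) = x ^ (m+1) * δ x by ring]
          module
      have hkey : δ (x ^ N0) = (N0 : ℚ) • (x ^ (N0 - 1) * δ x) := by
        have := hpow (N0 - 1)
        rw [show N0 - 1 + 1 = N0 by omega] at this
        rw [this]
        have : ((N0 - 1 : ℕ) + 1 : ℚ) = (N0 : ℚ) := by
          have : ((N0 - 1 : ℕ) : ℚ) = (N0 : ℚ) - 1 := by
            push_cast [Nat.cast_sub hpos]; ring
          rw [this]; ring
        rw [this]
      rw [hN0, map_zero] at hkey
      rw [← hc] at hkey
      have hNne : (N0 : ℚ) ≠ 0 := by exact_mod_cast hpos.ne'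
      have : x ^ (N0 - 1) * (c • (1 : H)) = 0 := by
        have := hkey.symm
        rcases smul_eq_zero.mp this with h | h
        · exact absurd h hNne
        · exact h
      rw [mul_smul_comm, mul_one] at this
      rcases smul_eq_zero.mp this with h | h
      · rw [← hc, h, zero_smul]
      · exact absurd h hlt
  · -- δ x ∈ 𝒜 (i + d) and 𝒜 0, distinct degrees
    have h1 : δ x ∈ 𝒜 (i + d) := hgr i x hx
    have h2 : (DirectSum.decompose 𝒜 (δ x) 0 : H) = δ x :=
      DirectSum.decompose_of_mem_same 𝒜 hδx
    have h3 : (DirectSum.decompose 𝒜 (δ x) 0 : H) = 0 :=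
      DirectSum.decompose_of_mem_ne 𝒜 h1 hcase
    rw [← h2, h3]

end Halperin
end

section
/- (Degree Inequality, part 1) Let H* = ℚ[x₁,…,x_k]/(u₁,…,u_k) be a pure model (degrees of x_i and u_i increasing, u_i with no constant/linear terms) for a positively elliptic algebra that does not split, i.e., admits no presentation in which the first l relations (0 < l < k) involve only the first l generators. Then for every i < k, |u_i| ≥ |x₁| + |x_{i+1}|. -/
/-!
Every monomial of a relation `u_j` is at least quadratic, so it has weight at least
`|x₁| + |x_t|` for each variable `x_t` it contains. If `|u_i| < |x₁| + |x_{i+1}|`, then by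
monotonicity of the degrees no `u_j` with `j ≤ i` contains a variable `x_t` with `t > i`, and the
presentation itself already splits.
-/

open MvPolynomial

namespace Finsupp

theorem exists_add_le_weight {σ M : Type*} [AddCommMonoid M] [PartialOrder M]
    [IsOrderedAddMonoid M] [CanonicallyOrderedAdd M] (w : σ → M) {m : σ →₀ ℕ} {j : σ}
    (hj : m j ≠ 0) (hdeg : 2 ≤ m.degree) : ∃ s, w s + w j ≤ m.weight w := by
  have hdeg' : (m - single j 1).degree + 1 = m.degree := by
    conv_rhs => rw [← sub_add_single_one_cancel hj]
    rw [map_add, degree_single]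
  obtain ⟨s, hs⟩ : ∃ s, (m - single j 1 : σ →₀ ℕ) s ≠ 0 := by
    by_contra! h
    rw [show m - single j 1 = 0 from ext h, map_zero] at hdeg'
    omega
  refine ⟨s, ?_⟩
  rw [← weight_sub_single_add hj]
  exact add_le_add_left (le_weight_of_ne_zero' w hs) _

end Finsupp

namespace Halperin

namespace Presentation

variable {k : ℕ} (P : Presentation k)

theorem eq_zero_of_mem_support_of_du_lt {c : ℕ} (hc : ∀ t, c ≤ P.w t) {i j : Fin k}
    (hdu : P.du i < c + P.w j) {m : Fin k →₀ ℕ} (hm : m ∈ (P.u i).support) : m j = 0 := by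
  by_contra hmj
  obtain ⟨s, hs⟩ := Finsupp.exists_add_le_weight P.w hmj (P.unolin i m hm)
  have hweight : m.weight P.w = P.du i := P.uhom i (mem_support_iff.mp hm)
  have := hc s
  omega

theorem splits_of_forall_mem_support {l : ℕ} (hl : 0 < l) (hlk : l < k)
    (hvars : ∀ i : Fin k, (i : ℕ) < l →
      ∀ m ∈ (P.u i).support, ∀ j : Fin k, l ≤ (j : ℕ) → m j = 0) :
    Splits P :=
  ⟨k, P, l, AlgEquiv.refl, hl, hlk, fun _ => Submodule.map_id _, hvars⟩

end Presentation

/-- Degree Inequality, part 1. -/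
theorem stmt10 {k : ℕ} (P : Presentation k) (hpure : P.Pure) (hns : ¬ Splits P)
    (i : Fin k) (h : (i : ℕ) + 1 < k) :
    P.w ⟨0, by omega⟩ + P.w ⟨(i : ℕ) + 1, h⟩ ≤ P.du i := by
  by_contra! hlt
  refine hns (P.splits_of_forall_mem_support (l := i + 1) i.succ_pos h ?_)
  intro i' hi' m hm j hj
  have hmin : ∀ t, P.w ⟨0, by omega⟩ ≤ P.w t := fun t => hpure.1 (Fin.le_def.mpr t.val.zero_le)
  refine P.eq_zero_of_mem_support_of_du_lt hmin ?_ hm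
  calc P.du i' ≤ P.du i := hpure.2.1 (Fin.le_def.mpr (by omega))
    _ < P.w ⟨0, by omega⟩ + P.w ⟨(i : ℕ) + 1, h⟩ := hlt
    _ ≤ P.w ⟨0, by omega⟩ + P.w j := add_le_add_right (hpure.1 (Fin.le_def.mpr hj)) _

end Halperin
end

section
/- Two coprime homogeneous quadratic polynomials p₃, p₄ in ℚ[x₃,x₄] can be brought, by a linear change of the variables x₃, x₄ and replacing (p₃,p₄) by an invertible linear combination, into one of the two normal forms (p₃,p₄) = (x₃², x₄²) or (p₃,p₄) = (x₃² − λx₄², x₃x₄) with λ ∈ ℚ \ {0}. -/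
open MvPolynomial

namespace Halperin

noncomputable def Pq (a b c : ℚ) : MvPolynomial (Fin 2) ℚ :=
  C a * X 0 ^ 2 + C b * (X 0 * X 1) + C c * X 1 ^ 2

lemma Pq_congr {a b c a' b' c' : ℚ} (h1 : a = a') (h2 : b = b') (h3 : c = c') :
    Pq a b c = Pq a' b' c' := by rw [h1, h2, h3]

lemma smul_Pq (t a b c : ℚ) : t • Pq a b c = Pq (t*a) (t*b) (t*c) := by
  simp only [Pq, smul_add, smul_eq_C_mul, C_mul]; ring

lemma add_Pq (a b c d e f : ℚ) : Pq a b c + Pq d e f = Pq (a+d) (b+e) (c+f) := by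
  simp only [Pq, C_add]; ring

lemma subst_Pq (M : Matrix (Fin 2) (Fin 2) ℚ) (a b c : ℚ) :
    (aeval fun i => ∑ j, M i j • (X j : MvPolynomial (Fin 2) ℚ)) (Pq a b c)
      = Pq (a * M 0 0 ^ 2 + b * (M 0 0 * M 1 0) + c * M 1 0 ^ 2)
          (2 * (a * (M 0 0 * M 0 1)) + b * (M 0 0 * M 1 1 + M 0 1 * M 1 0)
            + 2 * (c * (M 1 0 * M 1 1)))
          (a * M 0 1 ^ 2 + b * (M 0 1 * M 1 1) + c * M 1 1 ^ 2) := by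
  simp only [Pq, map_add, map_mul, map_pow, aeval_X, aeval_C, algebraMap_eq,
    Fin.sum_univ_two, smul_eq_C_mul, C_add, C_mul, C_pow, map_ofNat]
  ring

lemma Pq_X0sq : Pq 1 0 0 = (X 0 : MvPolynomial (Fin 2) ℚ) ^ 2 := by simp [Pq]
lemma Pq_X1sq : Pq 0 0 1 = (X 1 : MvPolynomial (Fin 2) ℚ) ^ 2 := by simp [Pq]
lemma Pq_X0X1 : Pq 0 1 0 = (X 0 : MvPolynomial (Fin 2) ℚ) * X 1 := by simp [Pq]
lemma Pq_case2 (lam : ℚ) :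
    Pq 1 0 (-lam) = (X 0 : MvPolynomial (Fin 2) ℚ) ^ 2 - lam • X 1 ^ 2 := by
  simp only [Pq, smul_eq_C_mul, map_neg, map_one, map_zero]; ring

lemma Pq_not_unit (a b c : ℚ) : ¬ IsUnit (Pq a b c) := by
  intro h
  have h2 := h.map (constantCoeff (σ := Fin 2) (R := ℚ))
  simp [Pq] at h2
lemma X1_not_unit : ¬ IsUnit (X 1 : MvPolynomial (Fin 2) ℚ) := by
  intro h
  have h2 := h.map (constantCoeff (σ := Fin 2) (R := ℚ))
  simp at h2
lemma line_not_unit (u v : ℚ) :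
    ¬ IsUnit (C v * X 0 - C u * X 1 : MvPolynomial (Fin 2) ℚ) := by
  intro h
  have h2 := h.map (constantCoeff (σ := Fin 2) (R := ℚ))
  simp at h2

lemma div_of_root (u v a b c : ℚ) (hv : v ≠ 0) (h : a*u^2 + b*u*v + c*v^2 = 0) :
    (C v * X 0 - C u * X 1 : MvPolynomial (Fin 2) ℚ) ∣ Pq a b c := by
  refine ⟨C (a/v) * X 0 + C ((b*v + u*a)/v^2) * X 1, ?_⟩
  have ha' : v * (a/v) = a := by field_simp
  have hb' : v * ((b*v + u*a)/v^2) - u * (a/v) = b := by field_simp; ring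
  have hc' : -(u * ((b*v + u*a)/v^2)) = c := by field_simp; linarith [h]
  calc Pq a b c = Pq (v * (a/v)) (v * ((b*v + u*a)/v^2) - u * (a/v))
        (-(u * ((b*v + u*a)/v^2))) := by rw [ha', hb', hc']
    _ = _ := by simp only [Pq, C_mul, C_sub, C_neg]; ring

set_option maxHeartbeats 4000000 in
lemma aux (a b c d e f : ℚ)
    (hcop : ∀ g : MvPolynomial (Fin 2) ℚ, g ∣ Pq a b c → g ∣ Pq d e f → IsUnit g)
    (ha : a ≠ 0) :
    ∃ (M N : Matrix (Fin 2) (Fin 2) ℚ), IsUnit M.det ∧ IsUnit N.det ∧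
      ((N 0 0 • (aeval fun i => ∑ j, M i j • (X j : MvPolynomial (Fin 2) ℚ)) (Pq a b c) +
          N 0 1 • (aeval fun i => ∑ j, M i j • (X j : MvPolynomial (Fin 2) ℚ)) (Pq d e f) = X 0 ^ 2 ∧
        N 1 0 • (aeval fun i => ∑ j, M i j • (X j : MvPolynomial (Fin 2) ℚ)) (Pq a b c) +
          N 1 1 • (aeval fun i => ∑ j, M i j • (X j : MvPolynomial (Fin 2) ℚ)) (Pq d e f) = X 1 ^ 2) ∨
       ∃ lam : ℚ, lam ≠ 0 ∧
        N 0 0 • (aeval fun i => ∑ j, M i j • (X j : MvPolynomial (Fin 2) ℚ)) (Pq a b c) +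
          N 0 1 • (aeval fun i => ∑ j, M i j • (X j : MvPolynomial (Fin 2) ℚ)) (Pq d e f) =
            X 0 ^ 2 - lam • X 1 ^ 2 ∧
        N 1 0 • (aeval fun i => ∑ j, M i j • (X j : MvPolynomial (Fin 2) ℚ)) (Pq a b c) +
          N 1 1 • (aeval fun i => ∑ j, M i j • (X j : MvPolynomial (Fin 2) ℚ)) (Pq d e f) =
            X 0 * X 1) := by
  by_cases hB : d*b - a*e = 0
  · -- Case B : the member d•p - a•q is C1 • X1^2
    have hC1 : d*c - a*f ≠ 0 := by
      intro hC0
      have hdvd : Pq a b c ∣ Pq d e f := by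
        refine ⟨C (d/a), ?_⟩
        have : Pq d e f = (d/a) • Pq a b c := by
          rw [smul_Pq]
          refine Pq_congr (by field_simp) ?_ ?_
          · field_simp; linear_combination -hB
          · field_simp; linear_combination -hC0
        rw [this, smul_eq_C_mul, mul_comm]
      exact Pq_not_unit a b c (hcop _ dvd_rfl hdvd)
    refine ⟨!![1, -(b/(2*a)); 0, 1],
      !![1/a - (c - b^2/(4*a))*d/(a*(d*c - a*f)), (c - b^2/(4*a))/(d*c - a*f);
         d/(d*c - a*f), -(a/(d*c - a*f))], ?_, ?_, Or.inl ⟨?_, ?_⟩⟩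
    · rw [Matrix.det_fin_two_of]
      norm_num
    · rw [Matrix.det_fin_two_of]
      apply isUnit_iff_ne_zero.mpr
      have : (1/a - (c - b^2/(4*a))*d/(a*(d*c - a*f))) * (-(a/(d*c - a*f)))
          - (c - b^2/(4*a))/(d*c - a*f) * (d/(d*c - a*f)) = -(1/(d*c - a*f)) := by
        have hC2 : c*d - a*f ≠ 0 := by rwa [mul_comm c d]
        field_simp
        ring
      rw [this]
      simp [hC1]
    · have hC2 : c*d - a*f ≠ 0 := by rwa [mul_comm c d]
      rw [subst_Pq, subst_Pq]
      simp only [Fin.isValue, Matrix.of_apply, Matrix.cons_val', Matrix.cons_val_zero, Matrix.cons_val_one, Matrix.head_cons,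
        Matrix.empty_val', Matrix.cons_val_fin_one, Matrix.head_fin_const]
      rw [show e = d*b/a from by field_simp; linear_combination -hB]
      rw [smul_Pq, smul_Pq, add_Pq, ← Pq_X0sq]
      refine Pq_congr ?_ ?_ ?_ <;> (try field_simp) <;> (try ring)
    · rw [subst_Pq, subst_Pq]
      simp only [Fin.isValue, Matrix.of_apply, Matrix.cons_val', Matrix.cons_val_zero, Matrix.cons_val_one, Matrix.head_cons,
        Matrix.empty_val', Matrix.cons_val_fin_one, Matrix.head_fin_const]
      rw [show e = d*b/a from by field_simp; linear_combination -hB]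
      rw [smul_Pq, smul_Pq, add_Pq, ← Pq_X1sq]
      refine Pq_congr ?_ ?_ ?_ <;> (try field_simp) <;> (try ring)
  · -- Case A : the member d•p - a•q is X1 * (B1 X0 + C1 X1) with B1 ≠ 0
    have hK : a*(d*c - a*f)^2 - b*(d*c - a*f)*(d*b - a*e) + c*(d*b - a*e)^2 ≠ 0 := by
      intro hK0
      have hdvd1 : (C (-(d*b - a*e)) * X 0 - C (d*c - a*f) * X 1 : MvPolynomial (Fin 2) ℚ)
          ∣ Pq a b c := by
        apply div_of_root _ _ _ _ _ (neg_ne_zero.mpr hB)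
        linear_combination hK0
      have h2 : a * (d*(d*c - a*f)^2 + e*(d*c - a*f)*(-(d*b - a*e)) + f*(-(d*b - a*e))^2) = 0 := by
        linear_combination d * hK0
      have hdvd2 : (C (-(d*b - a*e)) * X 0 - C (d*c - a*f) * X 1 : MvPolynomial (Fin 2) ℚ)
          ∣ Pq d e f := by
        apply div_of_root _ _ _ _ _ (neg_ne_zero.mpr hB)
        rcases mul_eq_zero.mp h2 with h | h
        · exact absurd h ha
        · exact h
      exact line_not_unit _ _ (hcop _ hdvd1 hdvd2)
    refine ⟨!![1/(d*b - a*e), -((d*c - a*f)/(d*b - a*e)); 0, 1],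
      !![(1 - (-2*a*(d*c - a*f)/(d*b - a*e)^2 + b/(d*b - a*e))*d)/(a/(d*b - a*e)^2),
         a*(-2*a*(d*c - a*f)/(d*b - a*e)^2 + b/(d*b - a*e))/(a/(d*b - a*e)^2);
         d, -a], ?_, ?_,
      Or.inr ⟨-((a*(d*c - a*f)^2 - b*(d*c - a*f)*(d*b - a*e) + c*(d*b - a*e)^2)/a), ?_, ?_, ?_⟩⟩
    · rw [Matrix.det_fin_two_of]
      apply isUnit_iff_ne_zero.mpr
      simp [hB]
    · rw [Matrix.det_fin_two_of]
      apply isUnit_iff_ne_zero.mpr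
      have : (1 - (-2*a*(d*c - a*f)/(d*b - a*e)^2 + b/(d*b - a*e))*d)/(a/(d*b - a*e)^2) * (-a)
          - a*(-2*a*(d*c - a*f)/(d*b - a*e)^2 + b/(d*b - a*e))/(a/(d*b - a*e)^2) * d
          = -(d*b - a*e)^2 := by
        field_simp
        ring
      rw [this]
      simpa using pow_ne_zero 2 hB
    · exact neg_ne_zero.mpr (div_ne_zero hK ha)
    · rw [subst_Pq, subst_Pq]
      simp only [Fin.isValue, Matrix.of_apply, Matrix.cons_val', Matrix.cons_val_zero, Matrix.cons_val_one, Matrix.head_cons,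
        Matrix.empty_val', Matrix.cons_val_fin_one, Matrix.head_fin_const]
      rw [smul_Pq, smul_Pq, add_Pq, ← Pq_case2]
      refine Pq_congr ?_ ?_ ?_ <;> (try field_simp) <;> (try ring)
    · rw [subst_Pq, subst_Pq]
      simp only [Fin.isValue, Matrix.of_apply, Matrix.cons_val', Matrix.cons_val_zero, Matrix.cons_val_one, Matrix.head_cons,
        Matrix.empty_val', Matrix.cons_val_fin_one, Matrix.head_fin_const]
      rw [smul_Pq, smul_Pq, add_Pq, ← Pq_X0X1]
      refine Pq_congr ?_ ?_ ?_ <;> (try field_simp) <;> (try ring)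


lemma Pq_monomials (a b c : ℚ) :
    Pq a b c = monomial (Finsupp.single 0 2) a
      + monomial (Finsupp.single 0 1 + Finsupp.single 1 1) b
      + monomial (Finsupp.single 1 2) c := by
  have h1 : (X 0 * X 1 : MvPolynomial (Fin 2) ℚ)
      = monomial (Finsupp.single 0 1 + Finsupp.single 1 1) 1 := by
    rw [X, X, monomial_mul, one_mul]
  rw [Pq, X_pow_eq_monomial, X_pow_eq_monomial, h1, C_mul_monomial, C_mul_monomial,
    C_mul_monomial, mul_one, mul_one, mul_one]

lemma degree_fin2 (m : Fin 2 →₀ ℕ) : m.degree = m 0 + m 1 := by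
  rw [Finsupp.degree, ← Fin.sum_univ_two (f := fun i => m i)]
  exact Finset.sum_subset (Finset.subset_univ _) (by intro i _ h; simpa using h)

lemma rep (p : MvPolynomial (Fin 2) ℚ) (hp : p.IsHomogeneous 2) :
    p = Pq (coeff (Finsupp.single 0 2) p)
          (coeff (Finsupp.single 0 1 + Finsupp.single 1 1) p)
          (coeff (Finsupp.single 1 2) p) := by
  rw [Pq_monomials]
  apply MvPolynomial.ext
  intro m
  have hm : m = Finsupp.single 0 (m 0) + Finsupp.single 1 (m 1) := by
    ext i; fin_cases i <;> simp
  by_cases hdeg : m 0 + m 1 = 2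
  · have h3 : (m 0 = 2 ∧ m 1 = 0) ∨ (m 0 = 1 ∧ m 1 = 1) ∨ (m 0 = 0 ∧ m 1 = 2) := by omega
    have n12 : (Finsupp.single 0 2 : Fin 2 →₀ ℕ) ≠ Finsupp.single 0 1 + Finsupp.single 1 1 := by
      intro h; simpa using DFunLike.congr_fun h 1
    have n13 : (Finsupp.single 0 2 : Fin 2 →₀ ℕ) ≠ Finsupp.single 1 2 := by
      intro h; simpa using DFunLike.congr_fun h 1
    have n23 : (Finsupp.single 0 1 + Finsupp.single 1 1 : Fin 2 →₀ ℕ) ≠ Finsupp.single 1 2 := by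
      intro h; simpa using DFunLike.congr_fun h 1
    rcases h3 with ⟨h0, h1⟩ | ⟨h0, h1⟩ | ⟨h0, h1⟩ <;>
      rw [hm, h0, h1] <;>
      simp [coeff_add, coeff_monomial, Finsupp.single_zero, n12, n13, n23, n12.symm, n13.symm,
        n23.symm]
  · have : coeff m p = 0 := hp.coeff_eq_zero (by rw [degree_fin2]; omega)
    rw [this, coeff_add, coeff_add, coeff_monomial, coeff_monomial, coeff_monomial]
    have e1 : Finsupp.single (0 : Fin 2) 2 ≠ m := by
      intro h; apply hdeg; rw [← h]; simp
    have e2 : Finsupp.single (0 : Fin 2) 1 + Finsupp.single 1 1 ≠ m := by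
      intro h; apply hdeg; rw [← h]; simp
    have e3 : Finsupp.single (1 : Fin 2) 2 ≠ m := by
      intro h; apply hdeg; rw [← h]; simp
    rw [if_neg e1, if_neg e2, if_neg e3]; ring


/-- normal forms for a pair of coprime homogeneous quadratics. -/
theorem stmt17 (p q : MvPolynomial (Fin 2) ℚ)
    (hp : p.IsHomogeneous 2) (hq : q.IsHomogeneous 2)
    (hcop : ∀ g : MvPolynomial (Fin 2) ℚ, g ∣ p → g ∣ q → IsUnit g) :
    ∃ (M N : Matrix (Fin 2) (Fin 2) ℚ), IsUnit M.det ∧ IsUnit N.det ∧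
      ((N 0 0 • (aeval fun i => ∑ j, M i j • (X j : MvPolynomial (Fin 2) ℚ)) p +
          N 0 1 • (aeval fun i => ∑ j, M i j • (X j : MvPolynomial (Fin 2) ℚ)) q = X 0 ^ 2 ∧
        N 1 0 • (aeval fun i => ∑ j, M i j • (X j : MvPolynomial (Fin 2) ℚ)) p +
          N 1 1 • (aeval fun i => ∑ j, M i j • (X j : MvPolynomial (Fin 2) ℚ)) q = X 1 ^ 2) ∨
       ∃ lam : ℚ, lam ≠ 0 ∧
        N 0 0 • (aeval fun i => ∑ j, M i j • (X j : MvPolynomial (Fin 2) ℚ)) p +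
          N 0 1 • (aeval fun i => ∑ j, M i j • (X j : MvPolynomial (Fin 2) ℚ)) q =
            X 0 ^ 2 - lam • X 1 ^ 2 ∧
        N 1 0 • (aeval fun i => ∑ j, M i j • (X j : MvPolynomial (Fin 2) ℚ)) p +
          N 1 1 • (aeval fun i => ∑ j, M i j • (X j : MvPolynomial (Fin 2) ℚ)) q =
            X 0 * X 1) := by
  obtain ⟨a, b, c, rfl⟩ : ∃ x y z, p = Pq x y z := ⟨_, _, _, rep p hp⟩
  obtain ⟨d, e, f, rfl⟩ : ∃ x y z, q = Pq x y z := ⟨_, _, _, rep q hq⟩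
  by_cases ha : a = 0
  · subst ha
    have hd : d ≠ 0 := by
      intro hd0
      subst hd0
      have h1 : (X 1 : MvPolynomial (Fin 2) ℚ) ∣ Pq 0 b c :=
        ⟨C b * X 0 + C c * X 1, by simp only [Pq, map_zero, zero_mul, zero_add]; ring⟩
      have h2 : (X 1 : MvPolynomial (Fin 2) ℚ) ∣ Pq 0 e f :=
        ⟨C e * X 0 + C f * X 1, by simp only [Pq, map_zero, zero_mul, zero_add]; ring⟩
      exact X1_not_unit (hcop _ h1 h2)
    obtain ⟨M, N, hM, hN, hcase⟩ := aux d e f 0 b c (fun g h1 h2 => hcop g h2 h1) hd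
    refine ⟨M, !![N 0 1, N 0 0; N 1 1, N 1 0], hM, ?_, ?_⟩
    · rw [Matrix.det_fin_two_of]
      rw [Matrix.det_fin_two] at hN
      apply isUnit_iff_ne_zero.mpr
      intro h
      exact isUnit_iff_ne_zero.mp hN (by linarith)
    · rcases hcase with ⟨h1, h2⟩ | ⟨lam, hl, h1, h2⟩
      · refine Or.inl ⟨?_, ?_⟩
        · simp only [Fin.isValue, Matrix.of_apply, Matrix.cons_val', Matrix.cons_val_zero,
            Matrix.cons_val_one, Matrix.head_cons, Matrix.empty_val', Matrix.cons_val_fin_one,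
            Matrix.head_fin_const]
          rw [add_comm]; exact h1
        · simp only [Fin.isValue, Matrix.of_apply, Matrix.cons_val', Matrix.cons_val_zero,
            Matrix.cons_val_one, Matrix.head_cons, Matrix.empty_val', Matrix.cons_val_fin_one,
            Matrix.head_fin_const]
          rw [add_comm]; exact h2
      · refine Or.inr ⟨lam, hl, ?_, ?_⟩
        · simp only [Fin.isValue, Matrix.of_apply, Matrix.cons_val', Matrix.cons_val_zero,
            Matrix.cons_val_one, Matrix.head_cons, Matrix.empty_val', Matrix.cons_val_fin_one,
            Matrix.head_fin_const]
          rw [add_comm]; exact h1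
        · simp only [Fin.isValue, Matrix.of_apply, Matrix.cons_val', Matrix.cons_val_zero,
            Matrix.cons_val_one, Matrix.head_cons, Matrix.empty_val', Matrix.cons_val_fin_one,
            Matrix.head_fin_const]
          rw [add_comm]; exact h2
  · exact aux a b c d e f hcop ha

end Halperin
end
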